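/- arXiv:2301.09844 — 2 statements merged into one kernel-verified Lean document; each statement's English description precedes it below -/
import Mathlib

section
/- Let ε_c, ε_s ≥ 0. Suppose that for a family of states ρ^fin_{ABE|N} (classical on systems A, B with values in {0,1}^N) and ideal states ρ^ideal_{ABE|N} := 2^{-N} Σ_{k∈{0,1}^N} |k,k⟩⟨k,k|_{AB} ⊗ tr_{AB}(ρ^fin_{ABE|N}), the correctness condition Σ_N Pr[N]·Pr[k_A ≠ k_B | N] ≤ ε_c and the secrecy condition (1/2) Σ_N Pr[N] ‖tr_B ρ^fin_{ABE|N} − tr_B ρ^ideal_{ABE|N}‖₁ ≤ ε_s both hold. Then (1/2) Σ_N Pr[N] ‖ρ^ideal_{ABE|N} − ρ^fin_{ABE|N}‖₁ ≤ ε_c + ε_s. -/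
open scoped Kronecker ComplexOrder
open Matrix

/-- The trace norm `‖A‖₁ := tr √(Aᴴ A)` of a complex square matrix. -/
noncomputable def traceNorm {ι : Type*} [Fintype ι] [DecidableEq ι] (A : Matrix ι ι ℂ) : ℝ :=
  (((Matrix.posSemidef_conjTranspose_mul_self A).1.eigenvectorUnitary.1 *
      diagonal (((↑) : ℝ → ℂ) ∘ (√·) ∘ (Matrix.posSemidef_conjTranspose_mul_self A).1.eigenvalues) *
      (star (Matrix.posSemidef_conjTranspose_mul_self A).1.eigenvectorUnitary :
        Matrix ι ι ℂ)).trace).re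

/-- Keys of length `N`. -/
abbrev Key (N : ℕ) := Fin N → Bool

/-- `|k⟩⟨k'|` on the classical register with index type `κ`. -/
noncomputable def ketbra {κ : Type*} [Fintype κ] [DecidableEq κ] (k k' : κ) :
    Matrix κ κ ℂ :=
  Matrix.single k k' 1


/-!
The classical registers make every operator in sight block diagonal, and the trace norm of a
block-diagonal operator is the sum of the trace norms of its blocks. Write `σ` for Eve's
marginal and `c = 2^{-N}`. An off-diagonal block `(a, b)` of `ρ^ideal - ρ^fin` contributes
`Pr[a, b]`. For a diagonal block `(a, a)`, the triangle inequality bounds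
`‖c σ - Pr[a, a] ρ_{aa}‖₁` by the secrecy block `‖Σ_b Pr[a, b] ρ_{ab} - c σ‖₁` plus
`Σ_{b ≠ a} Pr[a, b]`. Summing the blocks gives
`‖ρ^ideal - ρ^fin‖₁ ≤ 2 Pr[k_A ≠ k_B] + ‖tr_B ρ^fin - tr_B ρ^ideal‖₁` for every `N`, and
averaging over `N` gives the claim.
The triangle inequality for Hermitian `A` comes from `‖A‖₁ = max re tr (S A)` over
`-1 ≤ S ≤ 1`. The maximum is attained at `S = sign A`.
-/

section TraceNorm
open scoped MatrixOrder
variable {ι : Type*} [Fintype ι] [DecidableEq ι]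

lemma traceNorm_eq_re_trace_abs (A : Matrix ι ι ℂ) : traceNorm A = (CFC.abs A).trace.re := by
  have hA := posSemidef_conjTranspose_mul_self A
  rw [traceNorm, CFC.abs, CFC.sqrt_eq_cfc, star_eq_conjTranspose A,
    cfc_nnreal_eq_real _ _ (nonneg_iff_posSemidef.mpr hA), hA.1.cfc_eq]
  simp only [IsHermitian.cfc, Unitary.conjStarAlgAut_apply]
  congr 5
  funext i
  simp [Real.coe_sqrt, Real.coe_toNNReal', hA.eigenvalues_nonneg i]

omit [DecidableEq ι] in
lemma re_trace_nonneg_of_nonneg {A : Matrix ι ι ℂ} (hA : 0 ≤ A) : 0 ≤ A.trace.re :=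
  (Complex.le_def.mp (nonneg_iff_posSemidef.mp hA).trace_nonneg).1

lemma traceNorm_nonneg (A : Matrix ι ι ℂ) : 0 ≤ traceNorm A := by
  rw [traceNorm_eq_re_trace_abs]
  exact re_trace_nonneg_of_nonneg (CFC.abs_nonneg A)

lemma Matrix.PosSemidef.traceNorm_eq {A : Matrix ι ι ℂ} (hA : A.PosSemidef) :
    traceNorm A = A.trace.re := by
  rw [traceNorm_eq_re_trace_abs, CFC.abs_of_nonneg A hA.nonneg]

lemma traceNorm_neg (A : Matrix ι ι ℂ) : traceNorm (-A) = traceNorm A := by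
  simp only [traceNorm_eq_re_trace_abs, CFC.abs_neg]

lemma re_trace_mul_nonneg {A B : Matrix ι ι ℂ} (hA : 0 ≤ A) (hB : 0 ≤ B) :
    0 ≤ (A * B).trace.re := by
  obtain ⟨C, rfl⟩ := CStarAlgebra.nonneg_iff_eq_star_mul_self.mp hA
  rw [star_eq_conjTranspose, Matrix.mul_assoc, trace_mul_comm]
  exact re_trace_nonneg_of_nonneg
    ((nonneg_iff_posSemidef.mp hB).mul_mul_conjTranspose_same C).nonneg

lemma re_trace_mul_le_traceNorm {S A : Matrix ι ι ℂ} (hS₁ : 0 ≤ 1 - S) (hS₂ : 0 ≤ 1 + S)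
    (hA : A.IsHermitian) : (S * A).trace.re ≤ traceNorm A := by
  have hA' : IsSelfAdjoint A := hA
  -- `tr (S A⁺) ≤ tr A⁺` and `-tr (S A⁻) ≤ tr A⁻`, while `|A| = A⁺ + A⁻`
  have h₁ := re_trace_mul_nonneg hS₁ (CFC.posPart_nonneg A)
  have h₂ := re_trace_mul_nonneg hS₂ (CFC.negPart_nonneg A)
  rw [traceNorm_eq_re_trace_abs, ← CFC.posPart_add_negPart A]
  conv_lhs => rw [← CFC.posPart_sub_negPart A]
  simp only [Matrix.sub_mul, Matrix.add_mul, Matrix.one_mul, Matrix.mul_sub, trace_sub,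
    trace_add, Complex.sub_re, Complex.add_re] at h₁ h₂ ⊢
  linarith

lemma exists_re_trace_mul_eq_traceNorm {A : Matrix ι ι ℂ} (hA : A.IsHermitian) :
    ∃ S : Matrix ι ι ℂ, 0 ≤ 1 - S ∧ 0 ≤ 1 + S ∧ (S * A).trace.re = traceNorm A := by
  have hA' : IsSelfAdjoint A := hA
  let sign : ℝ → ℝ := fun x => if 0 ≤ x then 1 else -1
  -- the spectrum of a matrix is finite, so the discontinuity of `sign` is harmless
  have hcont : ∀ f : ℝ → ℝ, ContinuousOn f (spectrum ℝ A) :=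
    fun f => (Set.toFinite _).continuousOn f
  have hsign₁ : ∀ x, 0 ≤ 1 - sign x := fun x => by simp only [sign]; split_ifs <;> norm_num
  have hsign₂ : ∀ x, 0 ≤ 1 + sign x := fun x => by simp only [sign]; split_ifs <;> norm_num
  refine ⟨cfc sign A, ?_, ?_, ?_⟩
  · rw [← cfc_const_one ℝ A, ← cfc_sub _ sign A (hcont _) (hcont _)]
    exact cfc_nonneg fun x _ => hsign₁ x
  · rw [← cfc_const_one ℝ A, ← cfc_add A _ sign (hcont _) (hcont _)]
    exact cfc_nonneg fun x _ => hsign₂ x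
  · have hmul : cfc sign A * A = cfc (fun x => sign x * x) A := by
      rw [cfc_mul sign (fun x => x) A (hcont _) (hcont _), cfc_id' ℝ A]
    rw [traceNorm_eq_re_trace_abs, CFC.abs_eq_cfc_norm A, hmul]
    congr 3
    funext x
    simp only [sign, Real.norm_eq_abs]
    split_ifs with h
    · rw [abs_of_nonneg h]; ring
    · rw [abs_of_neg (not_le.mp h)]; ring

lemma traceNorm_add_le {A B : Matrix ι ι ℂ} (hA : A.IsHermitian) (hB : B.IsHermitian) :
    traceNorm (A + B) ≤ traceNorm A + traceNorm B := by
  obtain ⟨S, hS₁, hS₂, hS⟩ := exists_re_trace_mul_eq_traceNorm (hA.add hB)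
  rw [← hS, Matrix.mul_add, trace_add, Complex.add_re]
  exact add_le_add (re_trace_mul_le_traceNorm hS₁ hS₂ hA) (re_trace_mul_le_traceNorm hS₁ hS₂ hB)

lemma traceNorm_sub_le {A B : Matrix ι ι ℂ} (hA : A.IsHermitian) (hB : B.IsHermitian) :
    traceNorm (A - B) ≤ traceNorm A + traceNorm B := by
  simpa [sub_eq_add_neg, traceNorm_neg] using traceNorm_add_le hA hB.neg

end TraceNorm

section Densities
variable {ι E : Type*}

lemma posSemidef_sum_smul (s : Finset ι) {q : ι → ℝ} (hq : ∀ i, 0 ≤ q i)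
    {ρ : ι → Matrix E E ℂ} (hρ : ∀ i, (ρ i).PosSemidef) :
    (∑ i ∈ s, (q i : ℂ) • ρ i).PosSemidef :=
  posSemidef_sum s fun i _ => (hρ i).smul (Complex.zero_le_real.mpr (hq i))

variable [Fintype E]

lemma trace_sum_smul (s : Finset ι) (q : ι → ℝ) {ρ : ι → Matrix E E ℂ}
    (hρ : ∀ i, (ρ i).trace = 1) : (∑ i ∈ s, (q i : ℂ) • ρ i).trace = ∑ i ∈ s, q i := by
  simp [trace_sum, trace_smul, hρ]

lemma traceNorm_sum_smul [DecidableEq E] (s : Finset ι) {q : ι → ℝ} (hq : ∀ i, 0 ≤ q i)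
    {ρ : ι → Matrix E E ℂ} (hρ : ∀ i, (ρ i).PosSemidef) (htr : ∀ i, (ρ i).trace = 1) :
    traceNorm (∑ i ∈ s, (q i : ℂ) • ρ i) = ∑ i ∈ s, q i := by
  rw [(posSemidef_sum_smul s hq hρ).traceNorm_eq, trace_sum_smul s q htr]
  exact_mod_cast rfl

end Densities

section ClassicalQuantum
open scoped MatrixOrder
variable {K E : Type*} [Fintype K] [DecidableEq K]

noncomputable def cqOperator (B : K → Matrix E E ℂ) : Matrix (K × E) (K × E) ℂ :=
  ∑ k, ketbra k k ⊗ₖ B k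

lemma cqOperator_apply (B : K → Matrix E E ℂ) (k k' : K) (e e' : E) :
    cqOperator B (k, e) (k', e') = if k = k' then B k e e' else 0 := by
  simp [cqOperator, ketbra, Matrix.sum_apply, single_apply, ite_and]

lemma cqOperator_sub (B C : K → Matrix E E ℂ) :
    cqOperator (fun k => B k - C k) = cqOperator B - cqOperator C := by
  ext ⟨k, e⟩ ⟨k', e'⟩
  simp only [cqOperator_apply, Matrix.sub_apply]
  split_ifs <;> simp

lemma cqOperator_conjTranspose (B : K → Matrix E E ℂ) :
    (cqOperator B)ᴴ = cqOperator (fun k => (B k)ᴴ) := by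
  ext ⟨k, e⟩ ⟨k', e'⟩
  simp only [conjTranspose_apply, cqOperator_apply]
  split_ifs <;> simp_all

lemma posSemidef_ketbra_self (k : K) : (ketbra k k).PosSemidef := by
  rw [ketbra, ← diagonal_single]
  exact posSemidef_diagonal_iff.mpr fun i => by
    rw [Pi.single_apply]; split_ifs <;> norm_num

lemma sum_sum_smul_ketbra_pair_kronecker (P : K → K → ℝ) (ρ : K → K → Matrix E E ℂ) :
    ∑ a, ∑ b, (P a b : ℂ) • (ketbra (a, b) (a, b) ⊗ₖ ρ a b) =
      cqOperator fun p : K × K => (P p.1 p.2 : ℂ) • ρ p.1 p.2 := by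
  simp only [cqOperator, Fintype.sum_prod_type, kronecker_smul]

lemma smul_sum_ketbra_pair_kronecker (c : ℂ) (σ : Matrix E E ℂ) :
    c • ∑ k : K, ketbra (k, k) (k, k) ⊗ₖ σ =
      cqOperator fun p : K × K => if p.1 = p.2 then c • σ else 0 := by
  simp [cqOperator, Fintype.sum_prod_type, apply_ite, Finset.smul_sum, kronecker_smul]

lemma sum_sum_smul_ketbra_kronecker (P : K → K → ℝ) (ρ : K → K → Matrix E E ℂ) :
    ∑ a, ∑ b, (P a b : ℂ) • (ketbra a a ⊗ₖ ρ a b) =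
      cqOperator fun a => ∑ b, (P a b : ℂ) • ρ a b := by
  ext ⟨k, e⟩ ⟨k', e'⟩
  simp [cqOperator_apply, Matrix.sum_apply, ketbra, single_apply, ite_and]

lemma smul_sum_ketbra_kronecker (c : ℂ) (σ : Matrix E E ℂ) :
    c • ∑ k : K, ketbra k k ⊗ₖ σ = cqOperator fun _ => c • σ := by
  simp [cqOperator, Finset.smul_sum, kronecker_smul]

variable [Fintype E]

lemma cqOperator_mul (B C : K → Matrix E E ℂ) :
    cqOperator B * cqOperator C = cqOperator (fun k => B k * C k) := by
  ext ⟨k, e⟩ ⟨k', e'⟩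
  by_cases h : k = k' <;> simp [h, mul_apply, cqOperator_apply, Fintype.sum_prod_type]

lemma posSemidef_cqOperator {B : K → Matrix E E ℂ} (hB : ∀ k, (B k).PosSemidef) :
    (cqOperator B).PosSemidef :=
  posSemidef_sum _ fun k _ => (posSemidef_ketbra_self k).kronecker (hB k)

lemma trace_cqOperator (B : K → Matrix E E ℂ) :
    (cqOperator B).trace = ∑ k, (B k).trace := by
  simp [trace, cqOperator_apply, Fintype.sum_prod_type]

variable [DecidableEq E]

lemma abs_cqOperator (B : K → Matrix E E ℂ) :
    CFC.abs (cqOperator B) = cqOperator (fun k => CFC.abs (B k)) := by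
  refine CFC.sqrt_unique ?_ (posSemidef_cqOperator fun k => ?_).nonneg
  · rw [cqOperator_mul, star_eq_conjTranspose, cqOperator_conjTranspose, cqOperator_mul]
    simp only [CFC.abs_mul_abs, star_eq_conjTranspose]
  · exact nonneg_iff_posSemidef.mp (CFC.abs_nonneg _)

lemma traceNorm_cqOperator (B : K → Matrix E E ℂ) :
    traceNorm (cqOperator B) = ∑ k, traceNorm (B k) := by
  simp only [traceNorm_eq_re_trace_abs, abs_cqOperator, trace_cqOperator, Complex.re_sum]

end ClassicalQuantum

section KeyDistribution
variable {K E : Type*} [Fintype K] [DecidableEq K]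

def keyErrorProb (P : K → K → ℝ) : ℝ :=
  ∑ a, ∑ b, if a ≠ b then P a b else 0

lemma keyErrorProb_nonneg {P : K → K → ℝ} (hP : ∀ a b, 0 ≤ P a b) : 0 ≤ keyErrorProb P :=
  Finset.sum_nonneg fun a _ => Finset.sum_nonneg fun b _ => by
    split_ifs
    exacts [hP a b, le_rfl]

lemma keyErrorProb_le_one {P : K → K → ℝ} (hP : ∀ a b, 0 ≤ P a b)
    (hP1 : ∑ a, ∑ b, P a b = 1) : keyErrorProb P ≤ 1 :=
  hP1 ▸ Finset.sum_le_sum fun a _ => Finset.sum_le_sum fun b _ => by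
    split_ifs
    exacts [le_rfl, hP a b]

variable [Fintype E] [DecidableEq E]

lemma sum_traceNorm_ite_sub_smul_le (a : K) {q : K → ℝ} (hq : ∀ b, 0 ≤ q b)
    {ρ : K → Matrix E E ℂ} (hρ : ∀ b, (ρ b).PosSemidef) (htr : ∀ b, (ρ b).trace = 1)
    {τ : Matrix E E ℂ} (hτ : τ.IsHermitian) :
    ∑ b, traceNorm ((if a = b then τ else 0) - (q b : ℂ) • ρ b) ≤
      2 * (∑ b, if a ≠ b then q b else 0) + traceNorm (∑ b, (q b : ℂ) • ρ b - τ) := by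
  set s := Finset.univ.erase a
  set X := ∑ b, (q b : ℂ) • ρ b with hX
  have hoff : ∑ b ∈ s, traceNorm ((if a = b then τ else 0) - (q b : ℂ) • ρ b) = ∑ b ∈ s, q b :=
    Finset.sum_congr rfl fun b hb => by
      rw [if_neg (Finset.ne_of_mem_erase hb).symm, zero_sub, traceNorm_neg]
      simpa only [Finset.sum_singleton] using traceNorm_sum_smul {b} hq hρ htr
  have hdiag : τ - (q a : ℂ) • ρ a = ∑ b ∈ s, (q b : ℂ) • ρ b - (X - τ) := by
    rw [hX, ← Finset.add_sum_erase _ _ (Finset.mem_univ a)]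
    abel
  have herr : (∑ b, if a ≠ b then q b else 0) = ∑ b ∈ s, q b := by
    rw [← Finset.add_sum_erase _ _ (Finset.mem_univ a), if_neg (not_not.mpr rfl), zero_add]
    exact Finset.sum_congr rfl fun b hb => if_pos (Finset.ne_of_mem_erase hb).symm
  calc ∑ b, traceNorm ((if a = b then τ else 0) - (q b : ℂ) • ρ b)
      = traceNorm (∑ b ∈ s, (q b : ℂ) • ρ b - (X - τ)) + ∑ b ∈ s, q b := by
        rw [← Finset.add_sum_erase _ _ (Finset.mem_univ a), hoff, if_pos rfl, hdiag]
    _ ≤ (∑ b ∈ s, q b + traceNorm (X - τ)) + ∑ b ∈ s, q b := by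
        gcongr
        rw [← traceNorm_sum_smul s hq hρ htr]
        exact traceNorm_sub_le (posSemidef_sum_smul _ hq hρ).isHermitian
          ((posSemidef_sum_smul _ hq hρ).isHermitian.sub hτ)
    _ = 2 * (∑ b, if a ≠ b then q b else 0) + traceNorm (X - τ) := by
        rw [herr]
        ring

lemma traceNorm_ideal_sub_actual_le {P : K → K → ℝ} (hP : ∀ a b, 0 ≤ P a b)
    {ρ : K → K → Matrix E E ℂ} (hρ : ∀ a b, (ρ a b).PosSemidef)
    (htr : ∀ a b, (ρ a b).trace = 1) {σ : Matrix E E ℂ} (hσ : σ.IsHermitian) (c : ℝ) :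
    traceNorm ((c : ℂ) • ∑ k, ketbra (k, k) (k, k) ⊗ₖ σ -
        ∑ a, ∑ b, (P a b : ℂ) • (ketbra (a, b) (a, b) ⊗ₖ ρ a b)) ≤
      2 * keyErrorProb P + traceNorm (∑ a, ∑ b, (P a b : ℂ) • (ketbra a a ⊗ₖ ρ a b) -
        (c : ℂ) • ∑ k, ketbra k k ⊗ₖ σ) := by
  rw [smul_sum_ketbra_pair_kronecker, sum_sum_smul_ketbra_pair_kronecker,
    sum_sum_smul_ketbra_kronecker, smul_sum_ketbra_kronecker, ← cqOperator_sub,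
    ← cqOperator_sub, traceNorm_cqOperator, traceNorm_cqOperator, Fintype.sum_prod_type,
    keyErrorProb, Finset.mul_sum, ← Finset.sum_add_distrib]
  exact Finset.sum_le_sum fun a _ =>
    sum_traceNorm_ite_sub_smul_le a (hP a) (hρ a) (htr a) (hσ.smul (Complex.conj_ofReal c))

lemma traceNorm_marginal_sub_uniform_le {P : K → K → ℝ} (hP : ∀ a b, 0 ≤ P a b)
    (hP1 : ∑ a, ∑ b, P a b = 1) {ρ : K → K → Matrix E E ℂ} (hρ : ∀ a b, (ρ a b).PosSemidef)
    (htr : ∀ a b, (ρ a b).trace = 1) {c : ℝ} (hc : 0 ≤ c) :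
    traceNorm (∑ a, ∑ b, (P a b : ℂ) • (ketbra a a ⊗ₖ ρ a b) -
        (c : ℂ) • ∑ k, ketbra k k ⊗ₖ ∑ a, ∑ b, (P a b : ℂ) • ρ a b) ≤
      1 + c * Fintype.card K := by
  have hσ : (∑ a, ∑ b, (P a b : ℂ) • ρ a b).PosSemidef :=
    posSemidef_sum _ fun a _ => posSemidef_sum_smul _ (hP a) (hρ a)
  have hcσ := hσ.smul (Complex.zero_le_real.mpr hc)
  rw [sum_sum_smul_ketbra_kronecker, smul_sum_ketbra_kronecker]
  refine (traceNorm_sub_le (posSemidef_cqOperator fun a => posSemidef_sum_smul _ (hP a) (hρ a)).1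
    (posSemidef_cqOperator fun _ => hcσ).1).trans_eq ?_
  rw [traceNorm_cqOperator, traceNorm_cqOperator, hcσ.traceNorm_eq]
  have htrσ : (∑ a, ∑ b, (P a b : ℂ) • ρ a b).trace = 1 := by
    simp only [trace_sum, trace_sum_smul _ _ (htr _)]
    exact_mod_cast hP1
  simp only [traceNorm_sum_smul _ (hP _) (hρ _) (htr _), hP1, trace_smul, htrσ, smul_eq_mul,
    mul_one, Complex.ofReal_re, Finset.sum_const, Finset.card_univ, nsmul_eq_mul]
  ring

end KeyDistribution

section Averaging
variable {α : Type*} {p f g h : α → ℝ} {C : ℝ}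

lemma Summable.mul_of_nonneg_of_le (hp : Summable p) (hp0 : ∀ n, 0 ≤ p n) (hg0 : ∀ n, 0 ≤ g n)
    (hgC : ∀ n, g n ≤ C) : Summable fun n => p n * g n :=
  (hp.mul_right C).of_nonneg_of_le (fun n => mul_nonneg (hp0 n) (hg0 n))
    fun n => mul_le_mul_of_nonneg_left (hgC n) (hp0 n)

lemma tsum_mul_le_tsum_mul_add (hp : Summable p) (hp0 : ∀ n, 0 ≤ p n)
    (hfgh : ∀ n, f n ≤ g n + h n) (hf0 : ∀ n, 0 ≤ f n) (hg0 : ∀ n, 0 ≤ g n)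
    (hh0 : ∀ n, 0 ≤ h n) (hgC : ∀ n, g n ≤ C) (hhC : ∀ n, h n ≤ C) :
    ∑' n, p n * f n ≤ ∑' n, p n * g n + ∑' n, p n * h n := by
  have hg := hp.mul_of_nonneg_of_le hp0 hg0 hgC
  have hh := hp.mul_of_nonneg_of_le hp0 hh0 hhC
  rw [← hg.tsum_add hh]
  refine (hg.add hh).of_nonneg_of_le (fun n => mul_nonneg (hp0 n) (hf0 n)) (fun n => ?_)
    |>.tsum_le_tsum (fun n => ?_) (hg.add hh)
  all_goals
    rw [← mul_add]
    exact mul_le_mul_of_nonneg_left (hfgh n) (hp0 n)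

end Averaging

theorem secure_of_correct_and_secret_general
    {E : ℕ → Type*} [∀ N, Fintype (E N)] [∀ N, DecidableEq (E N)]
    (εc εs : ℝ)
    -- probability distribution over final key lengths
    (PrN : ℕ → ℝ) (hPrN : ∀ N, 0 ≤ PrN N) (hPrN1 : ∑' N, PrN N = 1)
    -- joint distribution of Alice's and Bob's final keys given length N
    (PrK : ∀ N, Key N → Key N → ℝ) (hPrK : ∀ N kA kB, 0 ≤ PrK N kA kB)
    (hPrK1 : ∀ N, ∑ kA, ∑ kB, PrK N kA kB = 1)
    -- Eve's conditional states: density operators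
    (ρE : ∀ N, Key N → Key N → Matrix (E N) (E N) ℂ)
    (hρEpos : ∀ N kA kB, (ρE N kA kB).PosSemidef)
    (hρEtr : ∀ N kA kB, (ρE N kA kB).trace = 1)
    -- the actual ccq state ρ^fin_{ABE|N}
    (ρfin : ∀ N, Matrix ((Key N × Key N) × E N) ((Key N × Key N) × E N) ℂ)
    (hρfin : ∀ N, ρfin N =
      ∑ kA, ∑ kB, (PrK N kA kB : ℂ) • (ketbra (kA, kB) (kA, kB) ⊗ₖ ρE N kA kB))
    -- the ideal state ρ^ideal_{ABE|N} = 2^{-N} Σ_k |k,k⟩⟨k,k| ⊗ tr_AB ρ^fin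
    (ρideal : ∀ N, Matrix ((Key N × Key N) × E N) ((Key N × Key N) × E N) ℂ)
    (hρideal : ∀ N, ρideal N = ((2 : ℂ) ^ N)⁻¹ •
      ∑ k : Key N, ketbra (k, k) (k, k) ⊗ₖ (∑ kA, ∑ kB, (PrK N kA kB : ℂ) • ρE N kA kB))
    -- correctness: Σ_N Pr[N]·Pr[k_A ≠ k_B | N] ≤ ε_c
    (hcorrect : ∑' N, PrN N *
      (∑ kA, ∑ kB, if kA ≠ kB then PrK N kA kB else 0) ≤ εc)
    -- secrecy: (1/2) Σ_N Pr[N] ‖tr_B ρ^fin_{ABE|N} − tr_B ρ^ideal_{ABE|N}‖₁ ≤ ε_s,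
    -- with the partial traces over B written out explicitly
    (hsecret : (1 / 2) * ∑' N, PrN N *
      traceNorm ((∑ kA, ∑ kB, (PrK N kA kB : ℂ) • ((ketbra kA kA : Matrix (Key N) (Key N) ℂ) ⊗ₖ ρE N kA kB)) -
        ((2 : ℂ) ^ N)⁻¹ • ∑ k : Key N,
          (ketbra k k : Matrix (Key N) (Key N) ℂ) ⊗ₖ (∑ kA, ∑ kB, (PrK N kA kB : ℂ) • ρE N kA kB)) ≤ εs) :
    (1 / 2) * ∑' N, PrN N * traceNorm (ρideal N - ρfin N) ≤ εc + εs := by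
  have hsum : Summable PrN := by
    by_contra h
    simp [tsum_eq_zero_of_not_summable h] at hPrN1
  have hc : ∀ N : ℕ, ((2 : ℂ) ^ N)⁻¹ = (((2 : ℝ) ^ N)⁻¹ : ℝ) := fun N => by push_cast; rfl
  have hcard : ∀ N : ℕ, 1 + ((2 : ℝ) ^ N)⁻¹ * Fintype.card (Key N) = 2 := fun N => by
    rw [Fintype.card_fun, Fintype.card_bool, Fintype.card_fin, Nat.cast_pow, Nat.cast_ofNat,
      inv_mul_cancel₀ (by positivity)]
    norm_num
  have hσ : ∀ N, (∑ kA, ∑ kB, (PrK N kA kB : ℂ) • ρE N kA kB).IsHermitian := fun N =>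
    (posSemidef_sum _ fun kA _ => posSemidef_sum_smul _ (hPrK N kA) (hρEpos N kA)).1
  have hkey := tsum_mul_le_tsum_mul_add (f := fun N => traceNorm (ρideal N - ρfin N)) (C := 2)
    hsum hPrN
    (fun N => by
      rw [hρideal, hρfin, hc]
      exact traceNorm_ideal_sub_actual_le (hPrK N) (hρEpos N) (hρEtr N) (hσ N) _)
    (fun N => traceNorm_nonneg _)
    (fun N => mul_nonneg zero_le_two (keyErrorProb_nonneg (hPrK N)))
    (fun N => traceNorm_nonneg _)
    (fun N => by linarith [keyErrorProb_le_one (hPrK N) (hPrK1 N)])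
    (fun N => (traceNorm_marginal_sub_uniform_le (hPrK N) (hPrK1 N) (hρEpos N) (hρEtr N)
      (by positivity)).trans_eq (hcard N))
  have h2 : ∑' N, PrN N * (2 * keyErrorProb (PrK N)) = 2 * ∑' N, PrN N * keyErrorProb (PrK N) := by
    simp_rw [mul_left_comm (PrN _) 2]
    exact tsum_mul_left
  change ∑' N, PrN N * keyErrorProb (PrK N) ≤ εc at hcorrect
  simp only [hc] at hsecret
  linarith

/-- If the protocol is `ε_c`-correct and `ε_s`-secret, it is `(ε_c + ε_s)`-secure. -/
theorem secure_of_correct_and_secret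
    {E : ℕ → Type*} [∀ N, Fintype (E N)] [∀ N, DecidableEq (E N)]
    (εc εs : ℝ) (hεc : 0 ≤ εc) (hεs : 0 ≤ εs)
    -- probability distribution over final key lengths
    (PrN : ℕ → ℝ) (hPrN : ∀ N, 0 ≤ PrN N) (hPrN1 : ∑' N, PrN N = 1)
    -- joint distribution of Alice's and Bob's final keys given length N
    (PrK : ∀ N, Key N → Key N → ℝ) (hPrK : ∀ N kA kB, 0 ≤ PrK N kA kB)
    (hPrK1 : ∀ N, ∑ kA, ∑ kB, PrK N kA kB = 1)
    -- Eve's conditional states: density operators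
    (ρE : ∀ N, Key N → Key N → Matrix (E N) (E N) ℂ)
    (hρEpos : ∀ N kA kB, (ρE N kA kB).PosSemidef)
    (hρEtr : ∀ N kA kB, (ρE N kA kB).trace = 1)
    -- the actual ccq state ρ^fin_{ABE|N}
    (ρfin : ∀ N, Matrix ((Key N × Key N) × E N) ((Key N × Key N) × E N) ℂ)
    (hρfin : ∀ N, ρfin N =
      ∑ kA, ∑ kB, (PrK N kA kB : ℂ) • (ketbra (kA, kB) (kA, kB) ⊗ₖ ρE N kA kB))
    -- the ideal state ρ^ideal_{ABE|N} = 2^{-N} Σ_k |k,k⟩⟨k,k| ⊗ tr_AB ρ^fin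
    (ρideal : ∀ N, Matrix ((Key N × Key N) × E N) ((Key N × Key N) × E N) ℂ)
    (hρideal : ∀ N, ρideal N = ((2 : ℂ) ^ N)⁻¹ •
      ∑ k : Key N, ketbra (k, k) (k, k) ⊗ₖ (∑ kA, ∑ kB, (PrK N kA kB : ℂ) • ρE N kA kB))
    -- correctness: Σ_N Pr[N]·Pr[k_A ≠ k_B | N] ≤ ε_c
    (hcorrect : ∑' N, PrN N *
      (∑ kA, ∑ kB, if kA ≠ kB then PrK N kA kB else 0) ≤ εc)
    -- secrecy: (1/2) Σ_N Pr[N] ‖tr_B ρ^fin_{ABE|N} − tr_B ρ^ideal_{ABE|N}‖₁ ≤ ε_s,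
    -- with the partial traces over B written out explicitly
    (hsecret : (1 / 2) * ∑' N, PrN N *
      traceNorm ((∑ kA, ∑ kB, (PrK N kA kB : ℂ) • ((ketbra kA kA : Matrix (Key N) (Key N) ℂ) ⊗ₖ ρE N kA kB)) -
        ((2 : ℂ) ^ N)⁻¹ • ∑ k : Key N,
          (ketbra k k : Matrix (Key N) (Key N) ℂ) ⊗ₖ (∑ kA, ∑ kB, (PrK N kA kB : ℂ) • ρE N kA kB)) ≤ εs) :
    (1 / 2) * ∑' N, PrN N * traceNorm (ρideal N - ρfin N) ≤ εc + εs :=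
  secure_of_correct_and_secret_general εc εs PrN hPrN hPrN1 PrK hPrK hPrK1 ρE hρEpos hρEtr ρfin
    hρfin ρideal hρideal hcorrect hsecret
end

section
/- Let n, m be integers with 1 ≤ m < n/2 and 0 < ε < 1. Define a'(n,m,ε) := [216√n·m(n−m)ln ε − 48 n^{3/2}(ln ε)² + 27√2(n−2m)√(−n²(ln ε)[9m(n−m) − 2n ln ε])] / [4(9n − 8 ln ε)(9m(n−m) − 2n ln ε)] and b'(n,m,ε) := √(18 a'² n − (16 a'² + 24 a'√n + 9n) ln ε) / (3√(2n)). Then the pair (a', b') satisfies b' ≥ |a'| and exp(−(2b'² − 2a'²)/(1 + 4a'/(3√n))²) = ε; i.e., it is a feasible point of the constraint in Kato's inequality achieving failure probability exactly ε. -/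
set_option maxHeartbeats 1600000
open Real

/-- The closed-form optimizer `a'(n,m,ε)` of Kato's inequality. -/
noncomputable def katoA (n m ε : ℝ) : ℝ :=
  (216 * Real.sqrt n * m * (n - m) * Real.log ε - 48 * n ^ ((3 : ℝ) / 2) * (Real.log ε) ^ 2
      + 27 * Real.sqrt 2 * (n - 2 * m) *
        Real.sqrt (-(n ^ 2) * Real.log ε * (9 * m * (n - m) - 2 * n * Real.log ε))) /
    (4 * (9 * n - 8 * Real.log ε) * (9 * m * (n - m) - 2 * n * Real.log ε))

/-- The corresponding `b'(n,m,ε)`. -/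
noncomputable def katoB (n m ε : ℝ) : ℝ :=
  Real.sqrt (18 * (katoA n m ε) ^ 2 * n -
      (16 * (katoA n m ε) ^ 2 + 24 * (katoA n m ε) * Real.sqrt n + 9 * n) * Real.log ε) /
    (3 * Real.sqrt (2 * n))

/-- The pair `(a', b')` is feasible for Kato's inequality and achieves failure probability
exactly `ε`: `b' ≥ |a'|` and `exp(−(2b'² − 2a'²)/(1 + 4a'/(3√n))²) = ε`. -/
theorem kato_optimizer_feasible (n m : ℤ) (ε : ℝ) (hm1 : 1 ≤ m) (hm2 : (m : ℝ) < n / 2)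
    (hε0 : 0 < ε) (hε1 : ε < 1) :
    |katoA n m ε| ≤ katoB n m ε ∧
      Real.exp (-(2 * (katoB n m ε) ^ 2 - 2 * (katoA n m ε) ^ 2) /
          (1 + 4 * katoA n m ε / (3 * Real.sqrt n)) ^ 2) = ε := by
  have hm1' : (1:ℝ) ≤ (m:ℝ) := by exact_mod_cast hm1
  have hL0 : Real.log ε < 0 := Real.log_neg hε0 hε1
  set L := Real.log ε with hLdef
  have hL0' : 0 < -L := by linarith
  have hn0 : (0:ℝ) < (n:ℝ) := by linarith
  set s := Real.sqrt (n:ℝ) with hsdef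
  have hs0 : 0 < s := Real.sqrt_pos.mpr hn0
  have hs2 : s ^ 2 = (n:ℝ) := Real.sq_sqrt hn0.le
  have hP : 0 < (m:ℝ) * ((n:ℝ) - m) := by nlinarith
  have h9 : 0 < 9 * (m:ℝ) * ((n:ℝ) - m) - 2 * n * L := by
    nlinarith [mul_pos hn0 hL0']
  have h98 : 0 < 9 * (n:ℝ) - 8 * L := by linarith
  have hR0 : (0:ℝ) ≤ -((n:ℝ) ^ 2) * L * (9 * (m:ℝ) * ((n:ℝ) - m) - 2 * n * L) := by
    nlinarith [mul_nonneg (mul_nonneg (sq_nonneg ((n:ℝ))) hL0'.le) h9.le]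
  set R := Real.sqrt (-((n:ℝ) ^ 2) * L * (9 * (m:ℝ) * ((n:ℝ) - m) - 2 * n * L)) with hRdef
  have hRnn : 0 ≤ R := Real.sqrt_nonneg _
  have hDpos : (0:ℝ) < 4 * (9 * (n:ℝ) - 8 * L) * (9 * (m:ℝ) * ((n:ℝ) - m) - 2 * n * L) :=
    mul_pos (mul_pos (by norm_num) h98) h9
  have hrpow : (n:ℝ) ^ ((3:ℝ)/2) = (n:ℝ) * s := by
    rw [show (3:ℝ)/2 = 1 + 1/2 by norm_num, Real.rpow_add hn0, Real.rpow_one, hsdef,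
      Real.sqrt_eq_rpow]
  set A := katoA (n:ℝ) (m:ℝ) ε with hAdef
  have hA : A * (4 * (9 * (n:ℝ) - 8 * L) * (9 * (m:ℝ) * ((n:ℝ) - m) - 2 * n * L)) =
      216 * s * (m:ℝ) * ((n:ℝ) - m) * L - 48 * ((n:ℝ) * s) * L ^ 2
        + 27 * Real.sqrt 2 * ((n:ℝ) - 2 * m) * R := by
    rw [hAdef, katoA, hrpow, ← hLdef, ← hsdef, ← hRdef]
    field_simp
    rw [mul_assoc]
    exact mul_div_cancel_right₀ _ (mul_pos (by linarith) (by linarith)).ne'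
  clear_value A R
  have hsqrt2 : (0:ℝ) ≤ Real.sqrt 2 := Real.sqrt_nonneg 2
  have hn2m : (0:ℝ) ≤ (n:ℝ) - 2 * m := by linarith
  have h4a3s : 0 < 4 * A + 3 * s := by
    have key : (4 * A + 3 * s) * (4 * (9 * (n:ℝ) - 8 * L) * (9 * (m:ℝ) * ((n:ℝ) - m) - 2 * n * L))
        = s * (972 * (n:ℝ) * ((m:ℝ) * ((n:ℝ) - m)) - 216 * (n:ℝ)^2 * L)
          + 108 * Real.sqrt 2 * ((n:ℝ) - 2 * m) * R := by
      linear_combination 4 * hA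
    have hpos : 0 < s * (972 * (n:ℝ) * ((m:ℝ) * ((n:ℝ) - m)) - 216 * (n:ℝ)^2 * L)
          + 108 * Real.sqrt 2 * ((n:ℝ) - 2 * m) * R := by
      have h1 : 0 < s * (972 * (n:ℝ) * ((m:ℝ) * ((n:ℝ) - m)) - 216 * (n:ℝ)^2 * L) := by
        apply mul_pos hs0
        nlinarith [mul_pos (mul_pos hn0 hn0) hL0', mul_pos hn0 hP]
      have h2 : 0 ≤ 108 * Real.sqrt 2 * ((n:ℝ) - 2 * m) * R :=
        mul_nonneg (mul_nonneg (by positivity) hn2m) hRnn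
      linarith
    by_contra hc
    push_neg at hc
    nlinarith [key, hpos, hDpos]
  set X := 18 * A ^ 2 * (n:ℝ) - (16 * A ^ 2 + 24 * A * s + 9 * (n:ℝ)) * L with hXdef
  clear_value X
  have hB : katoB (n:ℝ) (m:ℝ) ε = Real.sqrt X / (3 * Real.sqrt (2 * (n:ℝ))) := by
    rw [katoB, ← hAdef, ← hLdef, ← hsdef, ← hXdef]
  set B := katoB (n:ℝ) (m:ℝ) ε with hBdef
  clear_value B
  clear hAdef hBdef hRdef
  clear_value L s
  have hXr : X = 18 * A ^ 2 * (n:ℝ) - (4 * A + 3 * s) ^ 2 * L := by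
    rw [hXdef]; linear_combination (9 * L) * hs2
  have hX0 : 0 ≤ X := by
    rw [hXr]
    nlinarith [mul_nonneg (sq_nonneg (4 * A + 3 * s)) hL0'.le,
      mul_nonneg (mul_nonneg (by norm_num : (0:ℝ) ≤ 18) (sq_nonneg A)) hn0.le]
  have hBnn : 0 ≤ B := by
    rw [hB]; positivity
  have hB2 : B ^ 2 = X / (18 * (n:ℝ)) := by
    rw [hB, div_pow, mul_pow, Real.sq_sqrt hX0, Real.sq_sqrt (by linarith : (0:ℝ) ≤ 2 * (n:ℝ))]
    ring_nf
  have hA2B2 : A ^ 2 ≤ B ^ 2 := by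
    rw [hB2, hXr, le_div_iff₀ (by linarith : (0:ℝ) < 18 * (n:ℝ))]
    nlinarith [mul_nonneg (sq_nonneg (4 * A + 3 * s)) hL0'.le]
  constructor
  · calc |A| = Real.sqrt (A ^ 2) := (Real.sqrt_sq_eq_abs A).symm
      _ ≤ Real.sqrt (B ^ 2) := Real.sqrt_le_sqrt hA2B2
      _ = B := Real.sqrt_sq hBnn
  · have hq : 4 * A + 3 * s ≠ 0 := ne_of_gt h4a3s
    have hexp : -(2 * B ^ 2 - 2 * A ^ 2) / (1 + 4 * A / (3 * s)) ^ 2 = L := by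
      have h1 : 1 + 4 * A / (3 * s) = (4 * A + 3 * s) / (3 * s) := by
        field_simp
        ring
      have hne : 1 + 4 * A / (3 * s) ≠ 0 := by
        rw [h1]; exact div_ne_zero hq (by positivity)
      rw [div_eq_iff (pow_ne_zero 2 hne), hB2, hXr, h1, div_pow, ← hs2]
      field_simp
      ring
    rw [hexp, hLdef, Real.exp_log hε0]
end
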